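/- A set A ⊆ ℕ is a set of pointwise recurrence if and only if for every B ⊆ ℕ with A ⊆ B there exists a finite set F ⊆ ℕ \ B such that the set B ∪ (B − F) is thick. -/

import Mathlib

/-- The set `A - n`, difference taken inside the positive integers:
`A - n = {m : m >= 1 and m + n ∈ A}`. -/
def NSub (A : Set ℕ) (n : ℕ) : Set ℕ := {m : ℕ | 0 < m ∧ m + n ∈ A}

/-- `S ⊆ ℕ` is thick if every finite subset of `ℕ` has a translate inside `S`. -/
def Thick (S : Set ℕ) : Prop :=
  ∀ F : Finset ℕ, ∃ n : ℕ, 0 < n ∧ ∀ f ∈ F, f + n ∈ S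

/-- A topological dynamical system: a nonempty compact metric space together with a
continuous self-map. -/
structure MetricDynSystem where
  carrier : Type
  [metric : MetricSpace carrier]
  [cpt : CompactSpace carrier]
  [carrier_nonempty : Nonempty carrier]
  map : carrier → carrier
  continuous_map : Continuous map

attribute [instance] MetricDynSystem.metric MetricDynSystem.cpt MetricDynSystem.carrier_nonempty

/-- A system is minimal if every point has dense forward orbit `{T^n x : n ∈ ℕ}`. -/
def MetricDynSystem.Minimal (S : MetricDynSystem) : Prop :=
  ∀ x : S.carrier, Dense {y : S.carrier | ∃ n : ℕ, 0 < n ∧ S.map^[n] x = y}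

/-- `A` is a set of pointwise recurrence: for every minimal system, every point `x` and
every open neighborhood `U` of `x`, some `n ∈ A` has `T^n x ∈ U`. -/
def PointwiseRecurrent (A : Set ℕ) : Prop :=
  ∀ S : MetricDynSystem, S.Minimal →
    ∀ (x : S.carrier) (U : Set S.carrier), IsOpen U → x ∈ U →
      ∃ n ∈ A, 0 < n ∧ S.map^[n] x ∈ U

/-!
If `x ∈ U` in a minimal system and `B` is the complement of the set `R` of return times of `x`
to `U`, then a finite `F ⊆ R` makes `W = U ∩ ⋂_{f ∈ F} T^{-f} U` a neighbourhood of `x`. By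
minimality the returns to `W` are syndetic, so one of them lies in the thick set
`B ∪ (B - F)`, which is absurd; hence `A ⊄ B`, i.e. `A` meets `R`.

Conversely, if some `B ⊇ A` fails the condition, then for `C = ℕ⁺ \ B` every set
`C ∩ ⋂_{f ∈ F} (C - f)` with `F ⊆ C` finite is syndetic. Hence every finite 0-1 word whose
ones, except the one at `0`, lie in `C` has syndetically many translates whose ones all lie
in `C`. Gluing such translates hierarchically, `W_{k+1} = W_k u_k W_k` with `u_k` filled by
copies of `W_k, …, W_0` at bounded gaps, produces a uniformly recurrent sequence `x` with
`x 0 = true` whose other ones lie in `C`. Its orbit closure under the shift is minimal, and the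
return times of `x` to the cylinder `{z | z 0 = true}` avoid `B ⊇ A`.
-/

open Set Filter Topology Function

def Syndetic (S : Set ℕ) : Prop :=
  ∃ γ, ∀ a, ∃ g, 0 < g ∧ g ≤ γ ∧ a + g ∈ S

theorem Syndetic.mono {S T : Set ℕ} (hS : Syndetic S)
    (hST : ∀ n, 0 < n → n ∈ S → n ∈ T) : Syndetic T := by
  obtain ⟨γ, hγ⟩ := hS
  refine ⟨γ, fun a => ?_⟩
  obtain ⟨g, hg, hgγ, hgS⟩ := hγ a
  exact ⟨g, hg, hgγ, hST _ (by omega) hgS⟩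

theorem syndetic_compl_of_not_thick {S : Set ℕ} (hS : ¬ Thick S) : Syndetic Sᶜ := by
  simp only [Thick, not_forall, not_exists, not_and] at hS
  obtain ⟨G, hG⟩ := hS
  refine ⟨G.sup id + 1, fun a => ?_⟩
  obtain ⟨f, hf, hfS⟩ := hG (a + 1) (by omega)
  have hfG : f ≤ G.sup id := Finset.le_sup (f := id) hf
  exact ⟨f + 1, by omega, by omega, by rwa [show a + (f + 1) = f + (a + 1) by omega]⟩

def TranslatesSyndetic (C : Set ℕ) : Prop :=
  ∀ F : Finset ℕ, ↑F ⊆ C → Syndetic (C ∩ ⋂ f ∈ F, NSub C f)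

theorem translatesSyndetic_of_forall_not_thick {B : Set ℕ}
    (hB : ∀ F : Finset ℕ, (∀ f ∈ F, f ∉ B) → ¬ Thick (B ∪ ⋃ f ∈ F, NSub B f)) :
    TranslatesSyndetic {m | 0 < m ∧ m ∉ B} := by
  intro F hF
  refine (syndetic_compl_of_not_thick (hB F fun f hf => (hF hf).2)).mono fun n hn hnB => ?_
  simp only [mem_compl_iff, mem_union, mem_iUnion, not_or, not_exists] at hnB
  refine ⟨⟨hn, hnB.1⟩, mem_iInter₂.mpr fun f hf => ⟨hn, by omega, fun hfB => ?_⟩⟩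
  exact hnB.2 f hf ⟨hn, hfB⟩

section Dynamics

variable {α : Type*} [TopologicalSpace α] {T : α → α}

theorem exists_bound_iterate_mem [CompactSpace α] (hT : Continuous T)
    (hmin : ∀ x, Dense {y | ∃ n, 0 < n ∧ T^[n] x = y}) {W : Set α} (hW : IsOpen W)
    (hne : W.Nonempty) : ∃ N, ∀ y, ∃ k, 0 < k ∧ k ≤ N ∧ T^[k] y ∈ W := by
  have hcover : univ ⊆ ⋃ n : ℕ, T^[n + 1] ⁻¹' W := by
    intro y _
    obtain ⟨_, hzW, n, hn, rfl⟩ := (hmin y).inter_open_nonempty W hW hne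
    exact mem_iUnion.mpr ⟨n - 1, by rwa [mem_preimage, Nat.sub_add_cancel hn]⟩
  obtain ⟨t, ht⟩ := isCompact_univ.elim_finite_subcover _
    (fun n => hW.preimage (hT.iterate (n + 1))) hcover
  refine ⟨t.sup id + 1, fun y => ?_⟩
  obtain ⟨n, hn, hy⟩ := mem_iUnion₂.mp (ht (mem_univ y))
  have hnt : n ≤ t.sup id := Finset.le_sup (f := id) hn
  exact ⟨n + 1, n.succ_pos, by omega, hy⟩

theorem exists_iterate_mem_of_syndetic_returns [RegularSpace α] (hT : Continuous T) {x : α}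
    (hx : ∀ U ∈ 𝓝 x, Syndetic {n | T^[n] x ∈ U}) {y : α}
    (hy : y ∈ closure (range fun n => T^[n] x)) {V : Set α} (hV : IsOpen V) {r : ℕ}
    (hr : T^[r] x ∈ V) : ∃ n, 0 < n ∧ T^[n] y ∈ V := by
  obtain ⟨U, hU, hUc, hUV⟩ :=
    exists_mem_nhds_isClosed_subset ((hV.preimage (hT.iterate r)).mem_nhds hr)
  obtain ⟨γ, hγ⟩ := hx U hU
  have hcover : range (fun n => T^[n] x) ⊆ ⋃ g ∈ Finset.Icc 1 γ, T^[g] ⁻¹' U := by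
    rintro _ ⟨a, rfl⟩
    obtain ⟨g, hg, hgγ, hgU⟩ := hγ a
    refine mem_iUnion₂.mpr ⟨g, Finset.mem_Icc.mpr ⟨hg, hgγ⟩, ?_⟩
    rwa [mem_preimage, ← iterate_add_apply, add_comm]
  have hclosed : IsClosed (⋃ g ∈ Finset.Icc 1 γ, T^[g] ⁻¹' U) :=
    isClosed_biUnion_finset fun g _ => hUc.preimage (hT.iterate g)
  obtain ⟨g, hg, hgy⟩ := mem_iUnion₂.mp (closure_minimal hcover hclosed hy)
  exact ⟨r + g, by simp only [Finset.mem_Icc] at hg; omega, by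
    rw [iterate_add_apply]; exact hUV hgy⟩

theorem mapsTo_closure_range_iterate (hT : Continuous T) (x : α) :
    MapsTo T (closure (range fun n => T^[n] x)) (closure (range fun n => T^[n] x)) :=
  MapsTo.closure (by rintro _ ⟨n, rfl⟩; exact ⟨n + 1, iterate_succ_apply' T n x⟩) hT

end Dynamics

namespace MetricDynSystem

variable {α : Type} [TopologicalSpace α] [TopologicalSpace.MetrizableSpace α] [CompactSpace α]
  {T : α → α}

noncomputable abbrev orbitClosure (hT : Continuous T) (x : α) : MetricDynSystem :=
  letI := TopologicalSpace.metrizableSpaceMetric (closure (range fun n => T^[n] x))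
  haveI : CompactSpace (closure (range fun n => T^[n] x)) :=
    isCompact_iff_compactSpace.mp isClosed_closure.isCompact
  haveI : Nonempty (closure (range fun n => T^[n] x)) := ⟨⟨x, subset_closure ⟨0, rfl⟩⟩⟩
  { carrier := closure (range fun n => T^[n] x)
    map := (mapsTo_closure_range_iterate hT x).restrict
    continuous_map := hT.restrict _ }

theorem orbitClosure_iterate (hT : Continuous T) (x : α) (n : ℕ)
    (z : (orbitClosure hT x).carrier) :
    ((orbitClosure hT x).map^[n] z : α) = T^[n] z := by
  simp only [orbitClosure, MapsTo.iterate_restrict]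
  rfl

theorem minimal_orbitClosure (hT : Continuous T) {x : α}
    (hx : ∀ U ∈ 𝓝 x, Syndetic {n | T^[n] x ∈ U}) : (orbitClosure hT x).Minimal := by
  intro z
  rw [dense_iff_inter_open]
  rintro U hU ⟨w, hwU⟩
  obtain ⟨V, hV, rfl⟩ := isOpen_induced_iff.mp hU
  obtain ⟨_, hwV, r, rfl⟩ := mem_closure_iff.mp w.2 V hV hwU
  obtain ⟨n, hn, hnV⟩ := exists_iterate_mem_of_syndetic_returns hT hx z.2 hV hwV
  exact ⟨_, by rwa [mem_preimage, orbitClosure_iterate], n, hn, rfl⟩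

end MetricDynSystem

section Shift

variable {β : Type*}

def shift (x : ℕ → β) : ℕ → β := fun n => x (n + 1)

theorem shift_iterate_apply (k : ℕ) (x : ℕ → β) (n : ℕ) : shift^[k] x n = x (n + k) := by
  induction k generalizing x with
  | zero => rfl
  | succ k ih => rw [iterate_succ_apply, ih]; rfl

theorem continuous_shift [TopologicalSpace β] : Continuous (shift : (ℕ → β) → ℕ → β) :=
  continuous_pi fun n => continuous_apply (n + 1)

theorem syndetic_shift_returns [TopologicalSpace β] [DiscreteTopology β] {x : ℕ → β}
    (hx : ∀ L, Syndetic {n | ∀ i < L, x (i + n) = x i}) (U : Set (ℕ → β))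
    (hU : U ∈ 𝓝 x) : Syndetic {n | shift^[n] x ∈ U} := by
  obtain ⟨_, ⟨y, L, rfl⟩, hxy, hyU⟩ :=
    (PiNat.isTopologicalBasis_cylinders fun _ => β).mem_nhds_iff.mp hU
  rw [PiNat.mem_cylinder_iff_eq] at hxy
  refine (hx L).mono fun n _ hn => hyU ?_
  rw [← hxy, PiNat.mem_cylinder_iff]
  intro i hi
  rw [shift_iterate_apply, hn i hi]

end Shift

section OccursNear

variable {α : Type*}

theorem List.IsPrefix.getD_eq {u v : List α} (h : u <+: v) {i : ℕ} (hi : i < u.length) (d : α) :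
    v.getD i d = u.getD i d := by
  obtain ⟨t, rfl⟩ := h
  exact List.getD_append _ _ _ _ hi

theorem List.IsPrefix.getD_drop_eq {u v : List α} {s : ℕ} (h : u <+: v.drop s) {i : ℕ}
    (hi : i < u.length) (d : α) : v.getD (s + i) d = u.getD i d := by
  rw [← h.getD_eq hi, List.getD_eq_getElem?_getD, List.getD_eq_getElem?_getD, List.getElem?_drop]

theorem List.IsPrefix.drop_append {u v : List α} {s : ℕ} (h : u <+: v.drop s) (w : List α) :
    u <+: (v ++ w).drop s := by
  rw [List.drop_append]
  exact h.trans (List.prefix_append _ _)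

/-- Every cut point `p ≤ u.length` is within distance `h` of an occurrence `[s, s + v.length)`
of `v` in `u`. -/
def OccursNear (v : List α) (h : ℕ) (u : List α) : Prop :=
  ∀ p ≤ u.length, ∃ s, v <+: u.drop s ∧ s ≤ p + h ∧ p ≤ s + v.length + h

variable {u v x y z : List α} {h h' : ℕ}

theorem OccursNear.mono (hu : OccursNear v h u) (hh : h ≤ h') : OccursNear v h' u := by
  intro p hp
  obtain ⟨s, hs, h₁, h₂⟩ := hu p hp
  exact ⟨s, hs, by omega, by omega⟩

theorem occursNear_self (v : List α) : OccursNear v 0 v :=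
  fun p hp => ⟨0, List.prefix_refl v, by omega, by omega⟩

theorem occursNear_append_append (v f : List α) : OccursNear v f.length (v ++ f ++ v) := by
  intro p hp
  by_cases hpv : p ≤ v.length + f.length
  · exact ⟨0, by rw [List.drop_zero, List.append_assoc]; exact List.prefix_append _ _,
      by omega, by omega⟩
  · refine ⟨v.length + f.length, ?_, by omega, by simp only [List.length_append] at hp; omega⟩
    rw [← List.length_append, List.drop_left]

theorem OccursNear.glue (hxy : OccursNear v h (x ++ y)) (hyz : OccursNear v h (y ++ z)) :
    OccursNear v h (x ++ y ++ z) := by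
  intro p hp
  by_cases hpxy : p ≤ (x ++ y).length
  · obtain ⟨s, hs, h₁, h₂⟩ := hxy p hpxy
    exact ⟨s, hs.drop_append z, h₁, h₂⟩
  · simp only [List.length_append] at hp hpxy
    obtain ⟨s, hs, h₁, h₂⟩ := hyz (p - x.length) (by simp only [List.length_append]; omega)
    refine ⟨x.length + s, ?_, by omega, by omega⟩
    rwa [List.append_assoc, List.drop_length_add_append]

theorem OccursNear.append_of_isPrefix (hx : OccursNear v h (x ++ v)) (hu : OccursNear v h u)
    (hvu : v <+: u) : OccursNear v h (x ++ u) := by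
  obtain ⟨r, rfl⟩ := hvu
  rw [← List.append_assoc]
  exact hx.glue hu

theorem OccursNear.append_of_isSuffix (hu : OccursNear v h u) (hvu : v <:+ u)
    (hz : OccursNear v h (v ++ z)) : OccursNear v h (u ++ z) := by
  obtain ⟨r, rfl⟩ := hvu
  exact hu.glue hz

end OccursNear

/-- A rule placing the next copy of a word `w` at offset `gap w a > 0` after position `a`. -/
structure Placement where
  gap : List Bool → ℕ → ℕ
  gap_pos : ∀ w a, 0 < gap w a

namespace Placement

variable (P : Placement)

/-- A word of length `n` to be put at position `a`: copies of the first block `w` are placed by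
`P` as long as they fit, and the gaps before them are filled with the lower blocks `ws`. -/
def fill : List (List Bool) → ℕ → ℕ → List Bool
  | [], _, n => List.replicate n false
  | w :: ws, a, n =>
    if P.gap w a + w.length ≤ n then
      fill ws a (P.gap w a) ++ w ++
        fill (w :: ws) (a + P.gap w a + w.length) (n - (P.gap w a + w.length))
    else fill ws a n
termination_by ws _ n => (ws.length, n)
decreasing_by
  · exact Prod.Lex.left _ _ (by simp)
  · exact Prod.Lex.right _ (by have := P.gap_pos w a; omega)
  · exact Prod.Lex.left _ _ (by simp)

theorem fill_length (ws : List (List Bool)) (a n : ℕ) : (P.fill ws a n).length = n := by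
  induction ws generalizing a n with
  | nil => simp [fill]
  | cons w ws ih =>
    induction n using Nat.strong_induction_on generalizing a with
    | _ n ihn =>
      have := P.gap_pos w a
      rw [fill]
      split_ifs with hn
      · simp only [List.length_append, ih, ihn _ (by omega : n - (P.gap w a + w.length) < n)]
        omega
      · exact ih a n

/-- The words `[W_k, …, W_0]`, newest first; the second copy of `W_k` in `W_{k+1}` is placed
by `P` after the first. -/
def blocks : ℕ → List (List Bool)
  | 0 => [[true]]
  | k + 1 =>
    let w := (blocks k).headI
    (w ++ P.fill (blocks k) w.length (P.gap w w.length) ++ w) :: blocks k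

def word (k : ℕ) : List Bool := (P.blocks k).headI

/-- The limit of the words `P.word k`, each a prefix of the next. -/
def seq (n : ℕ) : Bool := (P.word n).getD n false

theorem word_succ (k : ℕ) : P.word (k + 1) =
    P.word k ++ P.fill (P.blocks k) (P.word k).length (P.gap (P.word k) (P.word k).length) ++
      P.word k := rfl

theorem blocks_eq_cons (k : ℕ) : P.blocks k = P.word k :: (P.blocks k).tail := by
  cases k <;> rfl

theorem word_mem_blocks (k : ℕ) : P.word k ∈ P.blocks k := by
  rw [blocks_eq_cons]
  exact List.mem_cons_self

theorem fill_blocks (m a n : ℕ) : P.fill (P.blocks m) a n =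
    if P.gap (P.word m) a + (P.word m).length ≤ n then
      P.fill (P.blocks m).tail a (P.gap (P.word m) a) ++ P.word m ++
        P.fill (P.blocks m) (a + P.gap (P.word m) a + (P.word m).length)
          (n - (P.gap (P.word m) a + (P.word m).length))
    else P.fill (P.blocks m).tail a n := by
  conv_lhs => rw [blocks_eq_cons]
  rw [fill, ← blocks_eq_cons]

theorem lt_length_word (k : ℕ) : k < (P.word k).length := by
  induction k with
  | zero => simp [word, blocks]
  | succ k ih => rw [word_succ]; simp only [List.length_append]; omega

theorem word_prefix {k m : ℕ} (h : k ≤ m) : P.word k <+: P.word m := by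
  induction m, h using Nat.le_induction with
  | base => exact List.prefix_refl _
  | succ m _ ih =>
    refine ih.trans ?_
    rw [word_succ, List.append_assoc]
    exact List.prefix_append _ _

theorem word_suffix {k m : ℕ} (h : k ≤ m) : P.word k <:+ P.word m := by
  induction m, h using Nat.le_induction with
  | base => exact List.suffix_refl _
  | succ m _ ih =>
    refine ih.trans ?_
    rw [word_succ]
    exact List.suffix_append _ _

theorem seq_eq_getD {k i : ℕ} (hi : i < (P.word k).length) :
    P.seq i = (P.word k).getD i false := by
  rcases le_total i k with h | h
  · exact ((P.word_prefix h).getD_eq (P.lt_length_word i) false).symm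
  · exact (P.word_prefix h).getD_eq hi false

variable {P}

theorem occursNear_fill_blocks {v : List Bool} {h m : ℕ} (hpre : v <+: P.word m)
    (hsuf : v <:+ P.word m) (hW : OccursNear v h (P.word m))
    (hlow : ∀ a n, n < P.gap (P.word m) a + (P.word m).length →
      OccursNear v h (v ++ P.fill (P.blocks m).tail a n ++ v)) (a n : ℕ) :
    OccursNear v h (v ++ P.fill (P.blocks m) a n ++ v) := by
  induction n using Nat.strong_induction_on generalizing a with
  | _ n ih =>
    rw [fill_blocks]
    split_ifs with hn
    · have := P.lt_length_word m
      have := P.gap_pos (P.word m) a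
      have hleft := (hlow a (P.gap (P.word m) a) (by omega)).append_of_isPrefix hW hpre
      have hright := ih _ (by omega : n - (P.gap (P.word m) a + (P.word m).length) < n)
        (a + P.gap (P.word m) a + (P.word m).length)
      rw [List.append_assoc] at hright
      simpa only [List.append_assoc] using
        hleft.append_of_isSuffix (hsuf.trans (List.suffix_append _ _)) hright
    · exact hlow a n (by omega)

/-- Every fill sits between two copies of some `W_m` with `m ≥ j`, which begin and end with
`W_j`; so a fill too short to contain `W_j` is still bridged by those two copies. -/
theorem occursNear_word_and_fill {j γ : ℕ} (hγ : ∀ a, P.gap (P.word j) a ≤ γ) {m : ℕ}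
    (hjm : j ≤ m) :
    OccursNear (P.word j) (γ + (P.word j).length) (P.word m) ∧
      ∀ a n, OccursNear (P.word j) (γ + (P.word j).length)
        (P.word j ++ P.fill (P.blocks m) a n ++ P.word j) := by
  induction m, hjm using Nat.le_induction with
  | base =>
    have hW := (occursNear_self (P.word j)).mono (Nat.zero_le (γ + (P.word j).length))
    refine ⟨hW, occursNear_fill_blocks (List.prefix_refl _) (List.suffix_refl _) hW
      fun a n hn => (occursNear_append_append _ _).mono ?_⟩
    rw [fill_length]
    have := hγ a
    omega
  | succ m hjm ih =>
    obtain ⟨hW, hfill⟩ := ih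
    have hsuf := P.word_suffix hjm
    have hword : OccursNear (P.word j) (γ + (P.word j).length) (P.word (m + 1)) := by
      have hright := hW.append_of_isSuffix hsuf (by
        rw [← List.append_assoc]
        exact hfill (P.word m).length (P.gap (P.word m) (P.word m).length))
      rw [← List.append_assoc] at hright
      rw [word_succ]
      exact hright.append_of_isPrefix hW (P.word_prefix hjm)
    exact ⟨hword, occursNear_fill_blocks (P.word_prefix (hjm.trans m.le_succ))
      (P.word_suffix (hjm.trans m.le_succ)) hword fun a n _ => hfill a n⟩

theorem syndetic_seq_returns (hP : ∀ k, ∃ γ, ∀ a, P.gap (P.word k) a ≤ γ) (L : ℕ) :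
    Syndetic {n | ∀ i < L, P.seq (i + n) = P.seq i} := by
  obtain ⟨γ, hγ⟩ := hP L
  have hL := P.lt_length_word L
  refine ⟨2 * (γ + (P.word L).length) + (P.word L).length + 1, fun a => ?_⟩
  -- the occurrence of `W_L` within `γ + |W_L|` of the cut point `p` starts after `a`
  set p := a + 1 + (γ + (P.word L).length) + (P.word L).length
  have hp : p ≤ (P.word (max L p)).length :=
    (le_max_right L p).trans (P.lt_length_word _).le
  obtain ⟨s, hs, h₁, h₂⟩ := (occursNear_word_and_fill hγ (le_max_left L p)).1 p hp
  refine ⟨s - a, by omega, by omega, fun i hi => ?_⟩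
  have hsi : s + i < (P.word (max L p)).length := by
    have := hs.length_le
    simp only [List.length_drop] at this
    omega
  rw [show i + (a + (s - a)) = s + i by omega, P.seq_eq_getD hsi, P.seq_eq_getD (k := L) (by omega),
    hs.getD_drop_eq (by omega)]

end Placement

def FitsAt (C : Set ℕ) (w : List Bool) (p : ℕ) : Prop :=
  ∀ i, w.getD i false = true → p + i ∈ C

section FitsAt

variable {C : Set ℕ}

theorem FitsAt.mono {D : Set ℕ} {w : List Bool} {p : ℕ} (h : FitsAt C w p) (hCD : C ⊆ D) :
    FitsAt D w p :=
  fun i hi => hCD (h i hi)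

theorem FitsAt.append {u w : List Bool} {p q : ℕ} (hu : FitsAt C u p) (hw : FitsAt C w q)
    (hq : q = p + u.length) : FitsAt C (u ++ w) p := by
  intro i hi
  by_cases hiu : i < u.length
  · rw [List.getD_append _ _ _ _ hiu] at hi
    exact hu i hi
  · rw [List.getD_append_right _ _ _ _ (by omega)] at hi
    have := hw _ hi
    rwa [hq, add_assoc, Nat.add_sub_cancel' (by omega)] at this

theorem Placement.fitsAt_fill (P : Placement) {ws : List (List Bool)}
    (hws : ∀ w ∈ ws, ∀ a, FitsAt C w (a + P.gap w a)) (a n : ℕ) :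
    FitsAt C (P.fill ws a n) a := by
  induction ws generalizing a n with
  | nil => intro i hi; simp [Placement.fill] at hi
  | cons w ws ih =>
    have hw := hws w List.mem_cons_self
    have hws' := fun w' hw' => hws w' (List.mem_cons_of_mem w hw')
    induction n using Nat.strong_induction_on generalizing a with
    | _ n ihn =>
      have := P.gap_pos w a
      rw [Placement.fill]
      split_ifs with hn
      · refine ((ih hws' a _).append (hw a) (by rw [Placement.fill_length])).append
          (ihn _ (by omega : n - (P.gap w a + w.length) < n) _) ?_
        simp only [List.length_append, Placement.fill_length]
        omega
      · exact ih hws' a n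

theorem syndetic_fitsAt (hC : TranslatesSyndetic C) {w : List Bool}
    (hw : FitsAt (insert 0 C) w 0) : Syndetic {p | FitsAt C w p} := by
  classical
  set F := (Finset.range w.length).filter fun i => 0 < i ∧ w.getD i false = true
  have hFC : ↑F ⊆ C := by
    intro i hi
    simp only [F, Finset.coe_filter, Finset.mem_range, mem_ofPred_eq] at hi
    have := hw i hi.2.2
    rw [zero_add, mem_insert_iff] at this
    exact this.resolve_left (by omega)
  refine (hC F hFC).mono fun p _ hp i hi => ?_
  rcases Nat.eq_zero_or_pos i with rfl | hi0
  · exact hp.1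
  · have hiw : i < w.length := by
      by_contra! h
      rw [List.getD_eq_default _ _ h] at hi
      exact Bool.false_ne_true hi
    have hiF : i ∈ F := by
      simp only [F, Finset.mem_filter, Finset.mem_range]
      exact ⟨hiw, hi0, hi⟩
    exact (mem_iInter₂.mp hp.2 i hiF).2

open Classical in
/-- Places each word at its first position after `a` where it fits inside `C` (at offset `1` if
there is none). -/
noncomputable def fitPlacement (C : Set ℕ) : Placement where
  gap w a := if h : ∃ g, 0 < g ∧ FitsAt C w (a + g) then Nat.find h else 1
  gap_pos w a := by
    split_ifs with h
    exacts [(Nat.find_spec h).1, one_pos]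

theorem fitPlacement_gap {w : List Bool} (hw : Syndetic {p | FitsAt C w p}) :
    ∃ γ, ∀ a, FitsAt C w (a + (fitPlacement C).gap w a) ∧
      (fitPlacement C).gap w a ≤ γ := by
  classical
  obtain ⟨γ, hγ⟩ := hw
  refine ⟨γ, fun a => ?_⟩
  obtain ⟨g, hg, hgγ, hgw⟩ := hγ a
  have hex : ∃ g, 0 < g ∧ FitsAt C w (a + g) := ⟨g, hg, hgw⟩
  simp only [fitPlacement, dif_pos hex]
  exact ⟨(Nat.find_spec hex).2, (Nat.find_min' hex ⟨hg, hgw⟩).trans hgγ⟩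

theorem fitsAt_blocks (hC : TranslatesSyndetic C) (k : ℕ) :
    ∀ w ∈ (fitPlacement C).blocks k, FitsAt (insert 0 C) w 0 := by
  set P := fitPlacement C
  induction k with
  | zero =>
    simp only [Placement.blocks, List.mem_singleton, forall_eq]
    intro i hi
    rcases i with _ | i
    · exact mem_insert 0 C
    · simp at hi
  | succ k ih =>
    have hplaced : ∀ w ∈ P.blocks k, ∀ a, FitsAt C w (a + P.gap w a) := fun w hw a =>
      ((fitPlacement_gap (syndetic_fitsAt hC (ih w hw))).choose_spec a).1
    rw [Placement.blocks_eq_cons, Placement.word_succ]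
    rintro w (_ | ⟨_, hw⟩)
    · have hfirst := ih _ (P.word_mem_blocks k)
      have hfill := (P.fitsAt_fill hplaced (P.word k).length
        (P.gap (P.word k) (P.word k).length)).mono (subset_insert 0 C)
      have hsecond := (hplaced _ (P.word_mem_blocks k) (P.word k).length).mono
        (subset_insert 0 C)
      refine (hfirst.append hfill (zero_add _).symm).append hsecond ?_
      simp only [List.length_append, Placement.fill_length]
      omega
    · exact ih w hw

theorem exists_seq_syndetic_returns (hC : TranslatesSyndetic C) :
    ∃ x : ℕ → Bool, x 0 = true ∧ (∀ n, 0 < n → x n = true → n ∈ C) ∧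
      ∀ L, Syndetic {n | ∀ i < L, x (i + n) = x i} := by
  have hword k : FitsAt (insert 0 C) ((fitPlacement C).word k) 0 :=
    fitsAt_blocks hC k _ ((fitPlacement C).word_mem_blocks k)
  refine ⟨(fitPlacement C).seq, rfl, fun n hn hxn => ?_,
    Placement.syndetic_seq_returns fun k => ?_⟩
  · have := hword n n hxn
    rw [zero_add, mem_insert_iff] at this
    exact this.resolve_left (by omega)
  · obtain ⟨γ, hγ⟩ := fitPlacement_gap (syndetic_fitsAt hC (hword k))
    exact ⟨γ, fun a => (hγ a).2⟩

end FitsAt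

theorem pointwiseRecurrent_of_forall_thick {A : Set ℕ}
    (hA : ∀ B : Set ℕ, A ⊆ B →
      ∃ F : Finset ℕ, (∀ f ∈ F, f ∉ B) ∧ Thick (B ∪ ⋃ f ∈ F, NSub B f)) :
    PointwiseRecurrent A := by
  intro S hS x U hU hxU
  by_contra! hAB
  obtain ⟨F, hFB, hthick⟩ := hA {m | 0 < m → S.map^[m] x ∉ U} hAB
  have hF : ∀ f ∈ F, S.map^[f] x ∈ U := fun f hf =>
    not_not.mp (Classical.not_imp.mp (hFB f hf)).2
  obtain ⟨N, hN⟩ := exists_bound_iterate_mem S.continuous_map hS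
    (hU.inter (isOpen_biInter_finset fun f _ => hU.preimage (S.continuous_map.iterate f)))
    ⟨x, hxU, mem_iInter₂.mpr hF⟩
  obtain ⟨n, hn, hnS⟩ := hthick (Finset.range (N + 1))
  obtain ⟨k, hk, hkN, hkU, hkF⟩ := hN (S.map^[n] x)
  rw [← iterate_add_apply] at hkU hkF
  rcases hnS k (Finset.mem_range.mpr (by omega)) with hB | hB
  · exact hB (by omega) hkU
  · obtain ⟨f, hf, -, hfB⟩ := mem_iUnion₂.mp hB
    have := mem_iInter₂.mp hkF f hf
    rw [mem_preimage, ← iterate_add_apply, add_comm f] at this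
    exact hfB (by omega) this

theorem PointwiseRecurrent.exists_thick {A B : Set ℕ} (hA : PointwiseRecurrent A)
    (hAB : A ⊆ B) :
    ∃ F : Finset ℕ, (∀ f ∈ F, f ∉ B) ∧ Thick (B ∪ ⋃ f ∈ F, NSub B f) := by
  by_contra! hB
  obtain ⟨x, hx0, hxC, hx⟩ := exists_seq_syndetic_returns
    (translatesSyndetic_of_forall_not_thick hB)
  have hxX : x ∈ closure (range fun n => shift^[n] x) := subset_closure ⟨0, rfl⟩
  obtain ⟨n, hnA, hn, hxn⟩ := hA _
    (MetricDynSystem.minimal_orbitClosure continuous_shift (syndetic_shift_returns hx))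
    ⟨x, hxX⟩ {z | (z : ℕ → Bool) 0 = true}
    ((isOpen_discrete {true}).preimage ((continuous_apply 0).comp continuous_subtype_val :
      Continuous fun z : closure (range fun n => shift^[n] x) => (z : ℕ → Bool) 0)) hx0
  have horbit := congrFun (MetricDynSystem.orbitClosure_iterate continuous_shift x n ⟨x, hxX⟩) 0
  rw [shift_iterate_apply, zero_add] at horbit
  exact (hxC n hn (horbit.symm.trans hxn)).2 (hAB hnA)

theorem pointwiseRecurrent_iff_thick_characterization (A : Set ℕ) :
    PointwiseRecurrent A ↔
      ∀ B : Set ℕ, A ⊆ B →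
        ∃ F : Finset ℕ, (∀ f ∈ F, f ∉ B) ∧ Thick (B ∪ ⋃ f ∈ F, NSub B f) :=
  ⟨fun hA _ hAB => hA.exists_thick hAB, pointwiseRecurrent_of_forall_thick⟩
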